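/- arXiv:1309.5582 — 2 statements merged into one kernel-verified Lean document; each statement's English description precedes it below -/
import Mathlib

section
/- (Deterministic core of the main theorem.) Let G = (ZMod 2)^n with n ≥ 1 and let A ⊆ G. Suppose that for every nonempty S ⊆ {1,…,n} the Fourier coefficient of the indicator of A satisfies |1̂_A(S)| ≤ (4/|G|)·√(ln(|G|)·|A|). Then for all subsets B, C ⊆ G, μ(A,B,C) ≤ |A||B||C|/|G| + 4·√(ln(|G|)·|A|·|B|·|C|). -/
/-!
Writing `1_A(b + c) = Σ_S 1̂_A(S) χ_S(b) χ_S(c)` gives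
`μ(A,B,C) = Σ_S 1̂_A(S) (Σ_{b∈B} χ_S(b)) (Σ_{c∈C} χ_S(c))`. The term `S = ∅` is `|A||B||C|/|G|`;
every other term is at most `ε |Σ_B χ_S| |Σ_C χ_S|` with `ε` the bound on the nontrivial
coefficients, and by Cauchy–Schwarz and Parseval (`Σ_S (Σ_B χ_S)² = |G||B|`) these sum to at most
`ε |G| √(|B||C|)`.
-/

open Finset

/-- The character `χ_S` of `(ZMod 2)^n` associated to `S ⊆ {1,…,n}`. -/
noncomputable def chi (n : ℕ) (S : Finset (Fin n)) (x : Fin n → ZMod 2) : ℝ :=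
  (-1 : ℝ) ^ (∑ i ∈ S, (x i).val)

/-- The Fourier coefficient `f̂(S) = (1/|G|) Σ_x f(x) χ_S(x)`. -/
noncomputable def fhat (n : ℕ) (f : (Fin n → ZMod 2) → ℝ) (S : Finset (Fin n)) : ℝ :=
  (∑ x : Fin n → ZMod 2, f x * chi n S x) / (2 ^ n : ℝ)

/-- The indicator function of a subset. -/
def ind {n : ℕ} (A : Finset (Fin n → ZMod 2)) : (Fin n → ZMod 2) → ℝ :=
  fun x => if x ∈ A then 1 else 0

/-- `μ(A,B,C) = |{(a,b,c) ∈ A × B × C : a = b + c}|`. -/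
def mu {n : ℕ} (A B C : Finset (Fin n → ZMod 2)) : ℕ :=
  ((A ×ˢ B ×ˢ C).filter (fun p => p.1 = p.2.1 + p.2.2)).card

lemma neg_one_pow_val_add {R : Type*} [Ring R] (a b : ZMod 2) :
    (-1 : R) ^ (a + b).val = (-1) ^ a.val * (-1) ^ b.val := by
  rw [ZMod.val_add, ← neg_one_pow_eq_pow_mod_two, pow_add]

lemma chi_add (n : ℕ) (S : Finset (Fin n)) (x y : Fin n → ZMod 2) :
    chi n S (x + y) = chi n S x * chi n S y := by
  simp only [chi, ← prod_pow_eq_pow_sum, ← prod_mul_distrib, Pi.add_apply, neg_one_pow_val_add]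

lemma chi_empty (n : ℕ) (x : Fin n → ZMod 2) : chi n ∅ x = 1 := by
  simp [chi]

lemma sum_chi (n : ℕ) (z : Fin n → ZMod 2) :
    ∑ S : Finset (Fin n), chi n S z = if z = 0 then 2 ^ n else 0 := by
  simp only [chi, ← prod_pow_eq_pow_sum, ← powerset_univ, ← prod_one_add]
  split_ifs with hz
  · norm_num [hz]
  · obtain ⟨i, hi⟩ : ∃ i, z i ≠ 0 := by simpa [funext_iff] using hz
    have hi1 : z i = 1 := (by decide : ∀ a : ZMod 2, a ≠ 0 → a = 1) _ hi
    exact prod_eq_zero (mem_univ i) (by simp [hi1, ZMod.val_one])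

lemma sum_chi_mul_chi (n : ℕ) (x y : Fin n → ZMod 2) :
    ∑ S : Finset (Fin n), chi n S x * chi n S y = if x = y then 2 ^ n else 0 := by
  simp only [← chi_add, sum_chi, ← ZModModule.sub_eq_add, sub_eq_zero]

theorem sum_fhat_mul_chi (n : ℕ) (f : (Fin n → ZMod 2) → ℝ) (x : Fin n → ZMod 2) :
    ∑ S : Finset (Fin n), fhat n f S * chi n S x = f x := by
  calc ∑ S : Finset (Fin n), fhat n f S * chi n S x
      = (∑ y, f y * ∑ S : Finset (Fin n), chi n S y * chi n S x) / 2 ^ n := by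
        simp only [fhat, div_mul_eq_mul_div, ← sum_div, sum_mul, mul_sum, mul_assoc]
        rw [sum_comm]
    _ = f x := by simp [sum_chi_mul_chi]

theorem sum_sq_sum_chi (n : ℕ) (B : Finset (Fin n → ZMod 2)) :
    ∑ S : Finset (Fin n), (∑ b ∈ B, chi n S b) ^ 2 = 2 ^ n * #B := by
  calc ∑ S : Finset (Fin n), (∑ b ∈ B, chi n S b) ^ 2
      = ∑ b ∈ B, ∑ b' ∈ B, ∑ S : Finset (Fin n), chi n S b * chi n S b' := by
        simp only [sq, sum_mul_sum]
        rw [sum_comm]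
        exact sum_congr rfl fun b _ => sum_comm
    _ = 2 ^ n * #B := by simp [sum_chi_mul_chi, mul_comm]

lemma mu_eq_sum_sum_ind {n : ℕ} (A B C : Finset (Fin n → ZMod 2)) :
    (mu A B C : ℝ) = ∑ b ∈ B, ∑ c ∈ C, ind A (b + c) := by
  simp only [mu, card_filter, Nat.cast_sum, sum_product, ind]
  rw [sum_comm]
  refine sum_congr rfl fun b _ => ?_
  rw [sum_comm]
  simp

theorem mu_eq_sum_fhat_mul {n : ℕ} (A B C : Finset (Fin n → ZMod 2)) :
    (mu A B C : ℝ) = ∑ S : Finset (Fin n),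
      fhat n (ind A) S * ((∑ b ∈ B, chi n S b) * ∑ c ∈ C, chi n S c) := by
  rw [mu_eq_sum_sum_ind]
  calc ∑ b ∈ B, ∑ c ∈ C, ind A (b + c)
      = ∑ b ∈ B, ∑ c ∈ C, ∑ S : Finset (Fin n), fhat n (ind A) S * (chi n S b * chi n S c) := by
        simp only [← sum_fhat_mul_chi n (ind A), chi_add]
    _ = _ := by
        simp only [sum_mul_sum]
        simp only [mul_sum]
        symm
        rw [sum_comm]
        exact sum_congr rfl fun b _ => sum_comm

lemma fhat_ind_empty {n : ℕ} (A : Finset (Fin n → ZMod 2)) :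
    fhat n (ind A) ∅ = #A / 2 ^ n := by
  simp [fhat, chi_empty, ind]

lemma sqrt_mul_mul_sqrt_mul {a x y : ℝ} (ha : 0 ≤ a) (hx : 0 ≤ x) :
    √(a * x) * √(a * y) = a * √(x * y) := by
  rw [← Real.sqrt_mul (mul_nonneg ha hx), mul_mul_mul_comm, Real.sqrt_mul (mul_self_nonneg a),
    Real.sqrt_mul_self ha]

theorem mu_le_of_abs_fhat_le {n : ℕ} (A B C : Finset (Fin n → ZMod 2)) {ε : ℝ} (hε : 0 ≤ ε)
    (hA : ∀ S : Finset (Fin n), S ≠ ∅ → |fhat n (ind A) S| ≤ ε) :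
    (mu A B C : ℝ) ≤ #A * #B * #C / 2 ^ n + ε * (2 ^ n * √(#B * #C)) := by
  set u : Finset (Fin n) → ℝ := fun S => ∑ b ∈ B, chi n S b
  set v : Finset (Fin n) → ℝ := fun S => ∑ c ∈ C, chi n S c
  have main_term : fhat n (ind A) ∅ * (u ∅ * v ∅) = #A * #B * #C / 2 ^ n := by
    simp only [fhat_ind_empty, u, v, chi_empty, sum_const, nsmul_one]
    ring
  rw [mu_eq_sum_fhat_mul, ← add_sum_erase univ _ (mem_univ ∅), main_term]
  gcongr
  calc ∑ S ∈ univ.erase ∅, fhat n (ind A) S * (u S * v S)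
      ≤ ∑ S ∈ univ.erase ∅, ε * (|u S| * |v S|) := by
        refine sum_le_sum fun S hS => ?_
        calc fhat n (ind A) S * (u S * v S) ≤ |fhat n (ind A) S| * (|u S| * |v S|) := by
              rw [← abs_mul, ← abs_mul]
              exact le_abs_self _
          _ ≤ ε * (|u S| * |v S|) := by
              gcongr
              exact hA S (ne_of_mem_erase hS)
    _ ≤ ε * ∑ S, |u S| * |v S| := by
        rw [mul_sum]
        exact sum_le_sum_of_subset_of_nonneg (erase_subset _ _) fun S _ _ => by positivity
    _ ≤ ε * (√(∑ S, |u S| ^ 2) * √(∑ S, |v S| ^ 2)) := by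
        gcongr
        exact Real.sum_mul_le_sqrt_mul_sqrt _ _ _
    _ = ε * (2 ^ n * √(#B * #C)) := by
        simp only [sq_abs, u, v, sum_sq_sum_chi]
        rw [sqrt_mul_mul_sqrt_mul (by positivity) (by positivity)]

theorem stmt2_general (n : ℕ) (A : Finset (Fin n → ZMod 2))
    (hA : ∀ S : Finset (Fin n), S ≠ ∅ →
      |fhat n (ind A) S| ≤ (4 / (2 ^ n : ℝ)) * Real.sqrt (Real.log (2 ^ n) * A.card)) :
    ∀ B C : Finset (Fin n → ZMod 2),
      (mu A B C : ℝ) ≤ (A.card : ℝ) * B.card * C.card / (2 ^ n : ℝ) +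
        4 * Real.sqrt (Real.log (2 ^ n) * A.card * B.card * C.card) := by
  intro B C
  have hlog : 0 ≤ Real.log (2 ^ n) := Real.log_nonneg (one_le_pow₀ one_le_two)
  refine (mu_le_of_abs_fhat_le A B C (by positivity) hA).trans_eq ?_
  congr 1
  rw [show Real.log (2 ^ n) * #A * #B * #C = Real.log (2 ^ n) * #A * (#B * #C) by ring,
    Real.sqrt_mul (by positivity) (#B * #C : ℝ)]
  field_simp

theorem stmt2 (n : ℕ) (hn : 1 ≤ n) (A : Finset (Fin n → ZMod 2))
    (hA : ∀ S : Finset (Fin n), S ≠ ∅ →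
      |fhat n (ind A) S| ≤ (4 / (2 ^ n : ℝ)) * Real.sqrt (Real.log (2 ^ n) * A.card)) :
    ∀ B C : Finset (Fin n → ZMod 2),
      (mu A B C : ℝ) ≤ (A.card : ℝ) * B.card * C.card / (2 ^ n : ℝ) +
        4 * Real.sqrt (Real.log (2 ^ n) * A.card * B.card * C.card) :=
  stmt2_general n A hA
end

section
/- For every ε > 0 there exist a constant K and an integer N such that for every finite abelian group G with |G| ≥ N and every m with 0 ≤ m ≤ |G|, the number of subsets A ⊆ G with |A| = m for which some non-principal character χ of G satisfies |(1/|G|) Σ_{x∈G} 1_A(x) χ(x)| > (2/|G|)·√(2(1+ε)·ln(|G|)·m′) is at most K·|G|^{−ε}·C(|G|, m), where m′ = min(m, |G| − m) and C(|G|, m) is the number of m-element subsets of G. (Hayes's theorem on the maximum non-principal Fourier coefficient of a random set.) -/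
/-!
Hayes's argument. Let `n = |G|`, `p = m / n`, and compare a uniformly random `m`-subset with a
`p`-random subset: since `m` is the mode of `Bin(n, p)`, the latter has exactly `m` elements with
probability at least `1 / (n + 1)`. For a nontrivial character `ψ` and a rotation `ω`, the
summands `Re (ω ψ x)` are bounded by `1` and sum to zero, so the exponential-moment bound
`e^y ≤ 1 + y + 11/18 y²` for `|y| ≤ 1/2` gives a Chernoff bound for `Re (ω Σ_{x ∈ A} ψ x)`.
Nine rotations by multiples of `π/4` suffice to see `9/10` of every complex number, so a union
bound over them and over the at most `n` characters bounds the failure probability by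
`9 n · n^{-(2+ε)}`, leaving `O(n^{-ε})` after the factor `n + 1`. For `m > n/2` pass to
complements, which only change the sign of the nontrivial Fourier coefficients.
-/

open Finset

noncomputable def fourierCoeffOfSet (G : Type*) [AddCommGroup G] [Fintype G] [DecidableEq G]
    (A : Finset G) (χ : AddChar G Circle) : ℂ :=
  (∑ x : G, (if x ∈ A then (1 : ℂ) else 0) * χ x) / (Fintype.card G : ℂ)

open Real

lemma exp_le_one_add_add_mul_sq {x : ℝ} (hx : |x| ≤ 1 / 2) :
    exp x ≤ 1 + x + 11 / 18 * x ^ 2 := by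
  have hbound := (abs_le.1 (exp_bound (hx.trans (by norm_num)) (by norm_num : 0 < 3))).2
  have hcube : |x| ^ 3 ≤ 1 / 2 * x ^ 2 := by
    rw [pow_succ, sq_abs, mul_comm]
    exact mul_le_mul_of_nonneg_right hx (sq_nonneg x)
  norm_num [sum_range_succ, Nat.factorial] at hbound
  nlinarith

lemma mul_exp_add_one_sub_le {p y : ℝ} (hp : 0 ≤ p) (hy : |y| ≤ 1 / 2) :
    p * exp y + (1 - p) ≤ exp (p * (y + 11 / 18 * y ^ 2)) := by
  have := mul_le_mul_of_nonneg_left (exp_le_one_add_add_mul_sq hy) hp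
  linarith [add_one_le_exp (p * (y + 11 / 18 * y ^ 2))]

lemma sum_le_sum_sum_of_forall_exists_mem {β κ : Type*} [DecidableEq β] {S : Finset β}
    {F : Finset κ} {T : κ → Finset β} {w : β → ℝ} (hw : ∀ b, 0 ≤ w b)
    (hS : ∀ b ∈ S, ∃ k ∈ F, b ∈ T k) :
    ∑ b ∈ S, w b ≤ ∑ k ∈ F, ∑ b ∈ T k, w b := by
  have hsub : S ⊆ (F.sigma T).image Sigma.snd := fun b hb => by
    obtain ⟨k, hk, hbk⟩ := hS b hb
    exact mem_image.2 ⟨⟨k, b⟩, mem_sigma.2 ⟨hk, hbk⟩, rfl⟩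
  calc ∑ b ∈ S, w b ≤ ∑ b ∈ (F.sigma T).image Sigma.snd, w b :=
        sum_le_sum_of_subset_of_nonneg hsub fun b _ _ => hw b
    _ ≤ ∑ x ∈ F.sigma T, w x.2 := sum_image_le_of_nonneg fun b _ => hw b
    _ = ∑ k ∈ F, ∑ b ∈ T k, w b := sum_sigma F T fun x => w x.2

lemma nine_div_ten_le_cos {y : ℝ} (hy : |y| ≤ π / 8) : 9 / 10 ≤ cos y := by
  have hy2 : y ^ 2 ≤ (π / 8) ^ 2 := sq_le_sq' (abs_le.1 hy).1 (abs_le.1 hy).2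
  nlinarith [one_sub_sq_div_two_le_cos (x := y), pi_lt_d2, pi_pos]

/-- Take `k` nearest to `arg z / (π/4)`: the rotated `z` lies within angle `π/8` of the positive
real axis. -/
lemma exists_nine_div_ten_mul_norm_le_re_exp_mul (z : ℂ) : ∃ k ∈ Icc (-4 : ℤ) 4,
    9 / 10 * ‖z‖ ≤ (Complex.exp (↑(-(k * (π / 4))) * Complex.I) * z).re := by
  set k := round (z.arg / (π / 4))
  have hπ4 : 0 < π / 4 := by positivity
  have hround : |z.arg / (π / 4) - k| ≤ 1 / 2 := abs_sub_round _
  have harg : |z.arg / (π / 4)| ≤ 4 := by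
    rw [abs_div, abs_of_pos hπ4, div_le_iff₀ hπ4]
    linarith [abs_le.2 ⟨(Complex.neg_pi_lt_arg z).le, Complex.arg_le_pi z⟩]
  have hk : |(k : ℝ)| < 5 := by
    linarith [abs_sub_abs_le_abs_sub (k : ℝ) (z.arg / (π / 4)),
      abs_sub_comm (k : ℝ) (z.arg / (π / 4))]
  refine ⟨k, mem_Icc.2 ?_, ?_⟩
  · have hlo : (-5 : ℤ) < k := by exact_mod_cast (abs_lt.1 hk).1
    have hhi : k < 5 := by exact_mod_cast (abs_lt.1 hk).2
    omega
  have hdev : |z.arg - k * (π / 4)| ≤ π / 8 := by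
    have : z.arg - k * (π / 4) = (z.arg / (π / 4) - k) * (π / 4) := by field_simp
    rw [this, abs_mul, abs_of_pos hπ4]
    nlinarith
  have hz : Complex.exp (↑(-(k * (π / 4))) * Complex.I) * z =
      ‖z‖ * Complex.exp (↑(z.arg - k * (π / 4)) * Complex.I) := by
    conv_lhs => rw [← Complex.norm_mul_exp_arg_mul_I z]
    rw [mul_left_comm, ← Complex.exp_add]
    push_cast; ring_nf
  rw [hz, Complex.re_ofReal_mul, Complex.exp_ofReal_mul_I_re, mul_comm (9 / 10)]
  exact mul_le_mul_of_nonneg_left (nine_div_ten_le_cos hdev) (norm_nonneg z)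

section Binomial

variable {n m : ℕ}

lemma choose_succ_mul_pow_mul_pow {a b k : ℕ} (hk : k < n) :
    n.choose k * a ^ k * b ^ (n - k) * (k + 1) =
        n.choose k * a ^ k * b ^ (n - (k + 1)) * ((k + 1) * b) ∧
      n.choose (k + 1) * a ^ (k + 1) * b ^ (n - (k + 1)) * (k + 1) =
        n.choose k * a ^ k * b ^ (n - (k + 1)) * (a * (n - k)) := by
  obtain ⟨u, hu⟩ : ∃ u, n - k = u + 1 := ⟨n - k - 1, by omega⟩
  have hu' : n - (k + 1) = u := by omega
  refine ⟨by rw [hu, hu']; ring, ?_⟩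
  calc n.choose (k + 1) * a ^ (k + 1) * b ^ (n - (k + 1)) * (k + 1)
      = n.choose (k + 1) * (k + 1) * a ^ (k + 1) * b ^ (n - (k + 1)) := by ring
    _ = n.choose k * a ^ k * b ^ (n - (k + 1)) * (a * (n - k)) := by
        rw [Nat.choose_succ_right_eq]; ring

lemma choose_mul_pow_mul_pow_le (hm : m ≤ n) (k : ℕ) :
    n.choose k * m ^ k * (n - m) ^ (n - k) ≤ n.choose m * m ^ m * (n - m) ^ (n - m) := by
  set f : ℕ → ℕ := fun k => n.choose k * m ^ k * (n - m) ^ (n - k)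
  have hup : Monotone fun j => f (min j m) := monotone_nat_of_le_succ fun j => by
    rcases lt_or_ge j m with hj | hj
    · rw [min_eq_left hj.le, min_eq_left hj]
      obtain ⟨h1, h2⟩ := choose_succ_mul_pow_mul_pow (a := m) (b := n - m) (hj.trans_le hm)
      refine Nat.le_of_mul_le_mul_right ?_ j.succ_pos
      simp only [f]
      rw [h1, h2]
      exact Nat.mul_le_mul_left _ (Nat.mul_le_mul (by omega) (by omega))
    · rw [min_eq_right hj, min_eq_right (by omega)]
  have hdown : Antitone fun j => f (max j m) := antitone_nat_of_succ_le fun j => by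
    rcases lt_or_ge j m with hj | hj
    · rw [max_eq_right hj.le, max_eq_right hj]
    rw [max_eq_left hj, max_eq_left (by omega)]
    rcases lt_or_ge j n with hjn | hjn
    · obtain ⟨h1, h2⟩ := choose_succ_mul_pow_mul_pow (a := m) (b := n - m) hjn
      refine Nat.le_of_mul_le_mul_right ?_ j.succ_pos
      simp only [f]
      rw [h1, h2]
      exact Nat.mul_le_mul_left _ (Nat.mul_le_mul (by omega) (by omega))
    · simp [f, Nat.choose_eq_zero_of_lt (Nat.lt_succ_of_le hjn)]
  rcases le_total k m with hk | hk
  · simpa [min_eq_left hk] using hup hk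
  · simpa [max_eq_left hk] using hdown hk

lemma pow_le_succ_mul_choose_mul_pow_mul_pow (hm : m ≤ n) :
    n ^ n ≤ (n + 1) * (n.choose m * m ^ m * (n - m) ^ (n - m)) :=
  calc n ^ n = (m + (n - m)) ^ n := by rw [Nat.add_sub_cancel' hm]
    _ = ∑ k ∈ range (n + 1), m ^ k * (n - m) ^ (n - k) * n.choose k := add_pow _ _ _
    _ ≤ ∑ _k ∈ range (n + 1), n.choose m * m ^ m * (n - m) ^ (n - m) :=
        sum_le_sum fun k _ => by linarith [choose_mul_pow_mul_pow_le hm k]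
    _ = (n + 1) * (n.choose m * m ^ m * (n - m) ^ (n - m)) := by simp

end Binomial

section Bernoulli

variable {ι : Type*} [Fintype ι]

noncomputable def bernoulliWeight (p : ℝ) (A : Finset ι) : ℝ :=
  p ^ #A * (1 - p) ^ (Fintype.card ι - #A)

lemma bernoulliWeight_nonneg {p : ℝ} (hp0 : 0 ≤ p) (hp1 : p ≤ 1) (A : Finset ι) :
    0 ≤ bernoulliWeight p A :=
  mul_nonneg (pow_nonneg hp0 _) (pow_nonneg (sub_nonneg.2 hp1) _)

lemma card_le_succ_mul_choose_mul_sum_bernoulliWeight {m : ℕ} (hm : m ≤ Fintype.card ι)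
    (S : Finset (Finset ι)) (hS : ∀ A ∈ S, #A = m) :
    (#S : ℝ) ≤ (Fintype.card ι + 1) * (Fintype.card ι).choose m *
      ∑ A ∈ S, bernoulliWeight (m / Fintype.card ι) A := by
  set n := Fintype.card ι
  set q : ℝ := (m / n) ^ m * (1 - m / n) ^ (n - m)
  have hsum : ∑ A ∈ S, bernoulliWeight (m / n) A = #S * q := by
    rw [sum_congr rfl fun A hA => by rw [bernoulliWeight, hS A hA], sum_const, nsmul_eq_mul]
  have hq : q * n ^ n = m ^ m * ((n - m : ℕ) : ℝ) ^ (n - m) := by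
    rcases Nat.eq_zero_or_pos n with hn | hn
    · obtain rfl : m = 0 := by omega
      simp [q, hn]
    have hn' : (n : ℝ) ≠ 0 := by positivity
    rw [← pow_mul_pow_sub (n : ℝ) hm, Nat.cast_sub hm]
    calc q * (n ^ m * n ^ (n - m)) = (m / n * n) ^ m * ((1 - m / n) * n) ^ (n - m) := by
          rw [mul_pow, mul_pow]; simp only [q]; ring
      _ = _ := by field_simp
  have hmode : (n : ℝ) ^ n ≤ (n + 1) * (n.choose m * m ^ m * ((n - m : ℕ) : ℝ) ^ (n - m)) := by
    exact_mod_cast pow_le_succ_mul_choose_mul_pow_mul_pow hm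
  refine le_of_mul_le_mul_right ?_ (by exact_mod_cast Nat.pow_self_pos : (0 : ℝ) < n ^ n)
  rw [hsum]
  calc (#S : ℝ) * n ^ n ≤ #S * ((n + 1) * (n.choose m * m ^ m * ((n - m : ℕ) : ℝ) ^ (n - m))) :=
        mul_le_mul_of_nonneg_left hmode (Nat.cast_nonneg _)
    _ = (n + 1) * n.choose m * (#S * q) * n ^ n := by
        linear_combination (-(#S * ((n : ℝ) + 1) * n.choose m)) * hq

variable [DecidableEq ι]

lemma sum_bernoulliWeight_mul_exp (p : ℝ) (b : ι → ℝ) :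
    ∑ A, bernoulliWeight p A * exp (∑ x ∈ A, b x) = ∏ x, (p * exp (b x) + (1 - p)) := by
  rw [Fintype.prod_add]
  refine sum_congr rfl fun A _ => ?_
  rw [prod_mul_distrib, prod_const, prod_const, ← exp_sum, card_compl, bernoulliWeight]
  ring

theorem sum_bernoulliWeight_le_exp (a : ι → ℝ) (ha : ∀ x, |a x| ≤ 1) (ha0 : ∑ x, a x = 0)
    {p l : ℝ} (hp0 : 0 ≤ p) (hp1 : p ≤ 1) (hl0 : 0 ≤ l) (hl : l ≤ 1 / 2) (s : ℝ) :
    ∑ A with s ≤ ∑ x ∈ A, a x, bernoulliWeight p A ≤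
      exp (-(l * s) + 11 / 18 * l ^ 2 * p * Fintype.card ι) := by
  have hw := bernoulliWeight_nonneg (ι := ι) hp0 hp1
  have hla : ∀ x, |l * a x| ≤ l := fun x => by
    rw [abs_mul, abs_of_nonneg hl0]
    exact mul_le_of_le_one_right hl0 (ha x)
  have hfactor : ∀ x, p * exp (l * a x) + (1 - p) ≤ exp (p * (l * a x) + 11 / 18 * l ^ 2 * p) :=
    fun x => (mul_exp_add_one_sub_le hp0 ((hla x).trans hl)).trans <| exp_le_exp.2 <| by
      have : (l * a x) ^ 2 ≤ l ^ 2 := sq_le_sq' (abs_le.1 (hla x)).1 (abs_le.1 (hla x)).2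
      nlinarith
  calc ∑ A with s ≤ ∑ x ∈ A, a x, bernoulliWeight p A
      ≤ ∑ A with s ≤ ∑ x ∈ A, a x, bernoulliWeight p A * exp (l * (∑ x ∈ A, a x - s)) := by
        refine sum_le_sum fun A hA => le_mul_of_one_le_right (hw A) (one_le_exp ?_)
        exact mul_nonneg hl0 (sub_nonneg.2 (mem_filter.1 hA).2)
    _ ≤ ∑ A, bernoulliWeight p A * exp (l * (∑ x ∈ A, a x - s)) :=
        sum_le_sum_of_subset_of_nonneg (subset_univ _) fun A _ _ => by positivity [hw A]
    _ = exp (-(l * s)) * ∏ x, (p * exp (l * a x) + (1 - p)) := by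
        rw [← sum_bernoulliWeight_mul_exp, mul_sum]
        refine sum_congr rfl fun A _ => ?_
        rw [mul_sub, sub_eq_add_neg, exp_add, mul_sum]; ring
    _ ≤ exp (-(l * s)) * ∏ x, exp (p * (l * a x) + 11 / 18 * l ^ 2 * p) := by
        gcongr with x
        exact hfactor x
    _ = exp (-(l * s) + 11 / 18 * l ^ 2 * p * Fintype.card ι) := by
        rw [← exp_sum, ← exp_add, sum_add_distrib, ← mul_sum, ← mul_sum, ha0, sum_const,
          card_univ, nsmul_eq_mul]
        congr 1
        ring

theorem sum_bernoulliWeight_lt_norm_le_exp (f : ι → ℂ) (hf : ∀ x, ‖f x‖ ≤ 1)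
    (hf0 : ∑ x, f x = 0) {p l : ℝ} (hp0 : 0 ≤ p) (hp1 : p ≤ 1) (hl0 : 0 ≤ l) (hl : l ≤ 1 / 2)
    (t : ℝ) :
    ∑ A with t < ‖∑ x ∈ A, f x‖, bernoulliWeight p A ≤
      9 * exp (-(l * (9 / 10 * t)) + 11 / 18 * l ^ 2 * p * Fintype.card ι) := by
  set a : ℤ → ι → ℝ := fun k x => (Complex.exp (↑(-(k * (π / 4))) * Complex.I) * f x).re
  have ha : ∀ k x, |a k x| ≤ 1 := fun k x => (Complex.abs_re_le_norm _).trans <| by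
    rw [norm_mul, Complex.norm_exp_ofReal_mul_I, one_mul]
    exact hf x
  have ha0 : ∀ k, ∑ x, a k x = 0 := fun k => by
    simp only [a]
    rw [← Complex.re_sum, ← mul_sum, hf0, mul_zero, Complex.zero_re]
  calc ∑ A with t < ‖∑ x ∈ A, f x‖, bernoulliWeight p A
      ≤ ∑ k ∈ Icc (-4 : ℤ) 4, ∑ A with 9 / 10 * t ≤ ∑ x ∈ A, a k x, bernoulliWeight p A :=
        sum_le_sum_sum_of_forall_exists_mem (bernoulliWeight_nonneg hp0 hp1) fun A hA => by
          obtain ⟨k, hk, hre⟩ := exists_nine_div_ten_mul_norm_le_re_exp_mul (∑ x ∈ A, f x)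
          refine ⟨k, hk, mem_filter.2 ⟨mem_univ _, ?_⟩⟩
          rw [mul_sum, Complex.re_sum] at hre
          linarith [(mem_filter.1 hA).2]
    _ ≤ ∑ _k ∈ Icc (-4 : ℤ) 4,
          exp (-(l * (9 / 10 * t)) + 11 / 18 * l ^ 2 * p * Fintype.card ι) :=
        sum_le_sum fun k _ => sum_bernoulliWeight_le_exp (a k) (ha k) (ha0 k) hp0 hp1 hl0 hl _
    _ = 9 * exp (-(l * (9 / 10 * t)) + 11 / 18 * l ^ 2 * p * Fintype.card ι) := by simp

theorem card_exists_lt_norm_sum_le {κ : Type*} (F : Finset κ) (f : κ → ι → ℂ)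
    (hf : ∀ k ∈ F, ∀ x, ‖f k x‖ ≤ 1) (hf0 : ∀ k ∈ F, ∑ x, f k x = 0) {m : ℕ} (hm : 0 < m)
    (hmn : m ≤ Fintype.card ι) {t : ℝ} (ht0 : 0 ≤ t) (htm : t ≤ m) :
    (#{A : Finset ι | #A = m ∧ ∃ k ∈ F, t < ‖∑ x ∈ A, f k x‖} : ℝ) ≤
      9 * (Fintype.card ι + 1) * #F * (Fintype.card ι).choose m *
        exp (-(107 / 360) * t ^ 2 / m) := by
  set n := Fintype.card ι
  set p : ℝ := m / n
  set l : ℝ := t / (2 * m)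
  have hmR : (0 : ℝ) < m := by exact_mod_cast hm
  have hnR : (0 : ℝ) < n := by exact_mod_cast hm.trans_le hmn
  have hp0 : 0 ≤ p := by positivity
  have hp1 : p ≤ 1 := div_le_one_of_le₀ (by exact_mod_cast hmn) hnR.le
  have hl0 : 0 ≤ l := by positivity
  have hl : l ≤ 1 / 2 := by rw [div_le_iff₀ (by positivity)]; linarith
  have hexp : -(l * (9 / 10 * t)) + 11 / 18 * l ^ 2 * p * n = -(107 / 360) * t ^ 2 / m := by
    simp only [l, p]
    field_simp
    ring
  calc (#{A : Finset ι | #A = m ∧ ∃ k ∈ F, t < ‖∑ x ∈ A, f k x‖} : ℝ)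
      ≤ (n + 1) * n.choose m *
          ∑ A with #A = m ∧ ∃ k ∈ F, t < ‖∑ x ∈ A, f k x‖, bernoulliWeight p A :=
        card_le_succ_mul_choose_mul_sum_bernoulliWeight hmn _ fun A hA => (mem_filter.1 hA).2.1
    _ ≤ (n + 1) * n.choose m * ∑ k ∈ F, ∑ A with t < ‖∑ x ∈ A, f k x‖, bernoulliWeight p A := by
        gcongr
        refine sum_le_sum_sum_of_forall_exists_mem (bernoulliWeight_nonneg hp0 hp1) fun A hA => ?_
        obtain ⟨k, hk, hlt⟩ := (mem_filter.1 hA).2.2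
        exact ⟨k, hk, mem_filter.2 ⟨mem_univ _, hlt⟩⟩
    _ ≤ (n + 1) * n.choose m * ∑ _k ∈ F, 9 * exp (-(107 / 360) * t ^ 2 / m) := by
        gcongr with k hk
        rw [← hexp]
        exact sum_bernoulliWeight_lt_norm_le_exp _ (hf k hk) (hf0 k hk) hp0 hp1 hl0 hl t
    _ = 9 * (n + 1) * #F * n.choose m * exp (-(107 / 360) * t ^ 2 / m) := by
        rw [sum_const, nsmul_eq_mul]
        ring

end Bernoulli

lemma Finset.natCard_card_eq_and_eq_natCard_card_eq_sub_and {α : Type*} [Fintype α]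
    [DecidableEq α] {P : Finset α → Prop} (hP : ∀ A, P Aᶜ ↔ P A) {m : ℕ}
    (hm : m ≤ Fintype.card α) :
    Nat.card {A : Finset α // #A = m ∧ P A} =
      Nat.card {A : Finset α // #A = Fintype.card α - m ∧ P A} :=
  Nat.card_congr <| (compl_involutive.toPerm _).subtypeEquiv fun A => by
    have := A.card_le_univ
    simp only [Function.Involutive.coe_toPerm, card_compl, hP]
    exact and_congr_left' (by omega)

section FourierCoeff

variable {G : Type*} [AddCommGroup G] [Fintype G] [DecidableEq G]

lemma fourierCoeffOfSet_eq (A : Finset G) (χ : AddChar G Circle) :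
    fourierCoeffOfSet G A χ = (∑ x ∈ A, (χ x : ℂ)) / Fintype.card G := by
  simp only [fourierCoeffOfSet, ite_mul, one_mul, zero_mul, sum_ite_mem, univ_inter]

omit [DecidableEq G] in
lemma circleEquivComplex_ne_zero {χ : AddChar G Circle} (hχ : χ ≠ 1) :
    AddChar.circleEquivComplex χ ≠ 0 :=
  (map_ne_zero_iff _ AddChar.circleEquivComplex.injective).2 hχ

lemma norm_fourierCoeffOfSet_compl (A : Finset G) {χ : AddChar G Circle} (hχ : χ ≠ 1) :
    ‖fourierCoeffOfSet G Aᶜ χ‖ = ‖fourierCoeffOfSet G A χ‖ := by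
  have hsum : ∑ x ∈ Aᶜ, (χ x : ℂ) + ∑ x ∈ A, (χ x : ℂ) = 0 :=
    (sum_compl_add_sum A _).trans
      (AddChar.sum_eq_zero_iff_ne_zero.2 (circleEquivComplex_ne_zero hχ))
  rw [fourierCoeffOfSet_eq, fourierCoeffOfSet_eq, eq_neg_of_add_eq_zero_left hsum, neg_div,
    norm_neg]

end FourierCoeff

section Hayes

variable {G : Type*} [AddCommGroup G] [Fintype G] [DecidableEq G]

lemma natCard_lt_norm_fourierCoeffOfSet_le_card_filter (m : ℕ) (c : ℝ) :
    Nat.card {A : Finset G // #A = m ∧ ∃ χ : AddChar G Circle, χ ≠ 1 ∧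
        c < ‖fourierCoeffOfSet G A χ‖} ≤
      #{A : Finset G | #A = m ∧ ∃ ψ ∈ ({ψ | ψ ≠ 0} : Finset (AddChar G ℂ)),
        c * Fintype.card G < ‖∑ x ∈ A, ψ x‖} := by
  classical
  rw [Nat.card_eq_fintype_card, Fintype.card_subtype]
  refine card_le_card fun A hA => ?_
  obtain ⟨-, hcard, χ, hχ, hlt⟩ := mem_filter.1 hA
  refine mem_filter.2 ⟨mem_univ _, hcard, _,
    mem_filter.2 ⟨mem_univ _, circleEquivComplex_ne_zero hχ⟩, ?_⟩
  rwa [fourierCoeffOfSet_eq, norm_div, Complex.norm_natCast,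
    lt_div_iff₀ (Nat.cast_pos.2 Fintype.card_pos)] at hlt

theorem natCard_lt_norm_fourierCoeffOfSet_le (ε : ℝ) (hε : 0 < ε) {m : ℕ}
    (hm : m ≤ Fintype.card G) :
    (Nat.card {A : Finset G // #A = m ∧ ∃ χ : AddChar G Circle, χ ≠ 1 ∧
        2 / (Fintype.card G : ℝ) * √(2 * (1 + ε) * log (Fintype.card G) * m) <
          ‖fourierCoeffOfSet G A χ‖} : ℝ) ≤
      18 * (Fintype.card G : ℝ) ^ (-ε) * (Fintype.card G).choose m := by
  set n := Fintype.card G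
  set t := 2 * √(2 * (1 + ε) * log n * m)
  have hnR : (0 : ℝ) < n := by exact_mod_cast Fintype.card_pos
  have hlog : 0 ≤ log n := log_nonneg (by exact_mod_cast Fintype.card_pos)
  have ht0 : 0 ≤ t := by positivity
  have hthr : 2 / (n : ℝ) * √(2 * (1 + ε) * log n * m) * n = t := by
    simp only [t]; field_simp
  have hcount := natCard_lt_norm_fourierCoeffOfSet_le_card_filter (G := G) m
    (2 / (n : ℝ) * √(2 * (1 + ε) * log n * m))
  rw [hthr] at hcount
  refine (Nat.cast_le.2 hcount).trans ?_
  rcases le_or_gt (m : ℝ) t with hmt | htm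
  · have hempty : #{A : Finset G | #A = m ∧ ∃ ψ ∈ ({ψ | ψ ≠ 0} : Finset (AddChar G ℂ)),
        t < ‖∑ x ∈ A, ψ x‖} = 0 := by
      refine card_eq_zero.2 (filter_eq_empty_iff.2 fun A _ ⟨hcard, ψ, _, hlt⟩ => ?_)
      have hle := norm_sum_le_of_le A fun x _ => (ψ.norm_apply x).le
      rw [sum_const, hcard, nsmul_one] at hle
      linarith
    rw [hempty, Nat.cast_zero]
    positivity
  · have hm0 : 0 < m := by exact_mod_cast ht0.trans_lt htm
    have hF : (#({ψ | ψ ≠ 0} : Finset (AddChar G ℂ)) : ℝ) ≤ n := by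
      exact_mod_cast (card_filter_le _ _).trans (AddChar.card_addChar_le G ℂ)
    have ht2 : t ^ 2 / m = 8 * (1 + ε) * log n := by
      simp only [t]
      rw [mul_pow, sq_sqrt (by positivity)]
      field_simp
      ring
    have hexp : exp (-(107 / 360) * t ^ 2 / m) ≤ (n : ℝ) ^ (-ε) / n ^ 2 := by
      rw [mul_div_assoc, ht2, ← rpow_two, ← rpow_sub hnR, rpow_def_of_pos hnR, exp_le_exp]
      nlinarith
    have hn2 : ((n : ℝ) + 1) * n / n ^ 2 ≤ 2 := by
      rw [div_le_iff₀ (by positivity)]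
      nlinarith [(Nat.one_le_cast (α := ℝ)).2 (Fintype.card_pos (α := G))]
    calc _ ≤ 9 * ((n : ℝ) + 1) * #({ψ | ψ ≠ 0} : Finset (AddChar G ℂ)) * n.choose m *
          exp (-(107 / 360) * t ^ 2 / m) :=
          card_exists_lt_norm_sum_le _ (fun ψ x => ψ x) (fun ψ _ x => (ψ.norm_apply x).le)
            (fun ψ hψ => AddChar.sum_eq_zero_iff_ne_zero.2 (mem_filter.1 hψ).2) hm0 hm ht0 htm.le
      _ ≤ 9 * ((n : ℝ) + 1) * n * n.choose m * ((n : ℝ) ^ (-ε) / n ^ 2) := by gcongr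
      _ = (((n : ℝ) + 1) * n / n ^ 2) * (9 * (n : ℝ) ^ (-ε) * n.choose m) := by ring
      _ ≤ 2 * (9 * (n : ℝ) ^ (-ε) * n.choose m) := by gcongr
      _ = 18 * (n : ℝ) ^ (-ε) * n.choose m := by ring

end Hayes

/-- Hayes's theorem: for every `ε > 0`, for all but an `O(|G|^{-ε})` fraction of the
`m`-element subsets `A` of a finite abelian group `G`, every non-principal Fourier
coefficient of `1_A` is at most `(2/|G|)·√(2(1+ε)·ln|G|·m')` in absolute value,
where `m' = min(m, |G| - m)`. -/
theorem stmt4 :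
    ∀ ε : ℝ, 0 < ε → ∃ K : ℝ, ∃ N : ℕ,
      ∀ (G : Type*) [AddCommGroup G] [Fintype G] [DecidableEq G],
        N ≤ Fintype.card G →
        ∀ m : ℕ, m ≤ Fintype.card G →
          (Nat.card {A : Finset G // A.card = m ∧
              ∃ χ : AddChar G Circle, χ ≠ 1 ∧
                (2 / (Fintype.card G : ℝ)) *
                    Real.sqrt (2 * (1 + ε) * Real.log (Fintype.card G) *
                      (min m (Fintype.card G - m))) <
                  ‖fourierCoeffOfSet G A χ‖} : ℝ) ≤
            K * (Fintype.card G : ℝ) ^ (-ε) * (Nat.choose (Fintype.card G) m) := by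
  intro ε hε
  refine ⟨18, 0, fun G _ _ _ _ m hm => ?_⟩
  rcases le_total m (Fintype.card G - m) with h | h
  · rw [min_eq_left h]
    exact natCard_lt_norm_fourierCoeffOfSet_le ε hε hm
  · rw [min_eq_right h, natCard_card_eq_and_eq_natCard_card_eq_sub_and
      (fun A => exists_congr fun χ => and_congr_right fun hχ => by
        rw [norm_fourierCoeffOfSet_compl A hχ]) hm, ← Nat.choose_symm hm]
    exact natCard_lt_norm_fourierCoeffOfSet_le ε hε (Nat.sub_le _ _)
end
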